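/- arXiv:2603.02111 — 5 statements merged into one kernel-verified Lean document; each statement's English description precedes it below -/
import Mathlib

section
/- Let q be a prime power, let 1 ≤ u < ∞ be a real exponent, and let F : H_1(F_q) → ℂ. Define G : F_q^2 → ℝ by G(x, y) = (∑_{t ∈ F_q} |F(x, y, t)|^u)^{1/u}. Then ‖G‖_{ℓ^u(F_q^2)} = ‖F‖_{ℓ^u(H_1(F_q))}, and for every direction class [v] in the projective line P^1(F_q) one has M_{H1} F([v]) ≤ M_2 G([v]). -/
/-!
`K` plays the role of the finite field `F_q` with `q = Fintype.card K` elements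
(the cardinality of a finite field is automatically a prime power).
The Heisenberg group `H₁(F_q)` is identified with `K × K × K`.
The projective line `P¹(F_q)` is identified with `Option K`, where `some m`
corresponds to the direction class `[1 : m]` and `none` to `[0 : 1]`
(every class has a unique such normal form).
-/

noncomputable section

open Finset

/-- Representative direction vector of a projective class. -/
def dirVec {K : Type*} [Field K] : Option K → K × K
  | some m => (1, m)
  | none => (0, 1)

/-- The point of the horizontal line through `p = (x₀, y₀, t₀)` with direction
vector `v = (a, b)` corresponding to the parameter `s`, namely
`(x₀ + s a, y₀ + s b, t₀ + s (x₀ b - y₀ a))`. -/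
def hPoint {K : Type*} [Field K] (p : K × K × K) (v : K × K) (s : K) : K × K × K :=
  (p.1 + s * v.1, p.2.1 + s * v.2, p.2.2 + s * (p.1 * v.2 - p.2.1 * v.1))

/-- Sum of `|F|` along the horizontal line through `p` with direction vector `v`. -/
def lineSumH1 {K : Type*} [Field K] [Fintype K] (Fc : K × K × K → ℂ)
    (p : K × K × K) (v : K × K) : ℝ :=
  ∑ s : K, ‖Fc (hPoint p v s)‖

/-- The horizontal Kakeya maximal function `M_{H₁} F` on `P¹(F_q) ≃ Option K`:
the maximum over all base points `p` of the sum of `|F|` along the horizontal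
line through `p` in the given direction. -/
def MH1 {K : Type*} [Field K] [Fintype K] (Fc : K × K × K → ℂ) (d : Option K) : ℝ :=
  Finset.univ.sup' ⟨((0 : K), (0 : K), (0 : K)), Finset.mem_univ _⟩
    fun p => lineSumH1 Fc p (dirVec d)

/-- `ℓ^r` norm of a complex-valued function on a finite set. -/
def lpNormC {X : Type*} [Fintype X] (r : ℝ) (g : X → ℂ) : ℝ :=
  (∑ x, ‖g x‖ ^ r) ^ (1 / r)

/-- `ℓ^r` norm of a real-valued function on a finite set. -/
def lpNormR {X : Type*} [Fintype X] (r : ℝ) (g : X → ℝ) : ℝ :=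
  (∑ x, |g x| ^ r) ^ (1 / r)

/-- Sum of `|f|` along the affine line `{w + s v : s ∈ F_q}` in `F_q²`,
for a real-valued function. -/
def lineSum2R {K : Type*} [Field K] [Fintype K] (f : K × K → ℝ) (w v : K × K) : ℝ :=
  ∑ s : K, |f (w.1 + s * v.1, w.2 + s * v.2)|

/-- The planar Kakeya maximal function `M₂ f` on `P¹(F_q) ≃ Option K`, for a
real-valued function on `F_q²`. -/
def M2R {K : Type*} [Field K] [Fintype K] (f : K × K → ℝ) (d : Option K) : ℝ :=
  Finset.univ.sup' ⟨((0 : K), (0 : K)), Finset.mem_univ _⟩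
    fun w => lineSum2R f w (dirVec d)

section

variable {ι : Type*} [Fintype ι] {u : ℝ} {f : ι → ℝ}

theorem rpow_sum_rpow_one_div_rpow (hu : u ≠ 0) (hf : ∀ i, 0 ≤ f i) :
    ((∑ i, f i ^ u) ^ (1 / u)) ^ u = ∑ i, f i ^ u := by
  rw [one_div, Real.rpow_inv_rpow (sum_nonneg fun i _ => Real.rpow_nonneg (hf i) u) hu]

theorem le_rpow_sum_rpow_one_div (hu : 0 < u) (hf : ∀ i, 0 ≤ f i) (i : ι) :
    f i ≤ (∑ j, f j ^ u) ^ (1 / u) :=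
  calc f i = (f i ^ u) ^ (1 / u) := by rw [one_div, Real.rpow_rpow_inv (hf i) hu.ne']
    _ ≤ (∑ j, f j ^ u) ^ (1 / u) :=
        Real.rpow_le_rpow (Real.rpow_nonneg (hf i) u)
          (single_le_sum (f := fun j => f j ^ u) (fun j _ => Real.rpow_nonneg (hf j) u)
            (mem_univ i))
          (by positivity)

theorem lpNormR_eq_lpNormC_of_fiber {X Y Z : Type*} [Fintype X] [Fintype Y] [Fintype Z]
    {F : X × Y × Z → ℂ} {G : X × Y → ℝ} (hu : u ≠ 0)
    (hG : ∀ x y, G (x, y) = (∑ t, ‖F (x, y, t)‖ ^ u) ^ (1 / u)) :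
    lpNormR u G = lpNormC u F := by
  unfold lpNormR lpNormC
  congr 1
  simp only [Fintype.sum_prod_type]
  refine sum_congr rfl fun x _ => sum_congr rfl fun y _ => ?_
  rw [hG, abs_of_nonneg (by positivity), rpow_sum_rpow_one_div_rpow hu fun t => norm_nonneg _]

variable {K : Type*} [Field K] [Fintype K] {Fc : K × K × K → ℂ} {G : K × K → ℝ}

-- The horizontal line through `p` projects onto the planar line through `(x₀, y₀)` with the
-- same direction, and `|F|` at a point is dominated by the fiber norm `G` below it.
theorem lineSumH1_le_lineSum2R (hu : 0 < u)
    (hG : ∀ x y : K, G (x, y) = (∑ t : K, ‖Fc (x, y, t)‖ ^ u) ^ (1 / u))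
    (p : K × K × K) (v : K × K) :
    lineSumH1 Fc p v ≤ lineSum2R G (p.1, p.2.1) v := by
  refine sum_le_sum fun s _ => ?_
  rw [hG, abs_of_nonneg (by positivity)]
  exact le_rpow_sum_rpow_one_div (f := fun t => ‖Fc (_, _, t)‖) hu (fun t => norm_nonneg _)
    (hPoint p v s).2.2

theorem MH1_le_M2R (hu : 0 < u)
    (hG : ∀ x y : K, G (x, y) = (∑ t : K, ‖Fc (x, y, t)‖ ^ u) ^ (1 / u)) (d : Option K) :
    MH1 Fc d ≤ M2R G d :=
  sup'_le _ _ fun p _ =>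
    le_sup'_of_le _ (mem_univ (p.1, p.2.1)) (lineSumH1_le_lineSum2R hu hG p (dirVec d))

end

/-- planar domination lemma.  If `G(x,y) = (∑_t |F(x,y,t)|^u)^{1/u}`,
then `‖G‖_{ℓ^u(F_q²)} = ‖F‖_{ℓ^u(H₁(F_q))}` and `M_{H₁} F ≤ M₂ G` pointwise on `P¹(F_q)`. -/
theorem stmt_0 {K : Type*} [Field K] [Fintype K] (u : ℝ) (hu : 1 ≤ u)
    (Fc : K × K × K → ℂ) (G : K × K → ℝ)
    (hG : ∀ x y : K, G (x, y) = (∑ t : K, ‖Fc (x, y, t)‖ ^ u) ^ (1 / u)) :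
    lpNormR u G = lpNormC u Fc ∧ ∀ d : Option K, MH1 Fc d ≤ M2R G d :=
  ⟨lpNormR_eq_lpNormC_of_fiber (by linarith) hG, MH1_le_M2R (by linarith) hG⟩
end
end

section
/- Let q be a prime power and let u, v be real exponents with 2 ≤ u < ∞ and 1 ≤ v ≤ u. Then for every F : H_1(F_q) → ℂ one has ‖M_{H1} F‖_{ℓ^v(P^1(F_q))} ≤ 2√2 · q^{1 + 1/v − 2/u} · ‖F‖_{ℓ^u(H_1(F_q))}. -/
/-!
`K` plays the role of the finite field `F_q` with `q = Fintype.card K` elements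
(the cardinality of a finite field is automatically a prime power).
The Heisenberg group `H₁(F_q)` is identified with `K × K × K`.
The projective line `P¹(F_q)` is identified with `Option K`, where `some m`
corresponds to the direction class `[1 : m]` and `none` to `[0 : 1]`
(every class has a unique such normal form).
-/

noncomputable section

open Finset

/-!
Project the maximising line in direction `d` to the plane: it becomes a line `ℓ_d` of `q` points
of `F_q²`, along which `|F| ≤ G`, where `G(x, y)` is the `ℓ^u` norm of the fibre `t ↦ F(x, y, t)`.
Hölder on each line gives `(∑_{ℓ_d} G)^u ≤ q^{u-2} (∑_{ℓ_d} G^{u/2})²`. The `q + 1` lines have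
distinct directions, so they meet pairwise in at most one point, and Córdoba's `L²` argument
bounds `∑_d (∑_{ℓ_d} G^{u/2})²` by `(2q + 1) ∑ G^u = (2q + 1) ‖F‖_u^u`. Passing from `ℓ^u` to
`ℓ^v` on the `q + 1` directions costs `(q + 1)^{1/v - 1/u}`.
-/

section Cordoba

variable {ι α : Type*} [Fintype ι] [DecidableEq α] (E : ι → Finset α)

theorem sum_mul_sum_mem_eq_sum_mul_sum_filter_mem [Fintype α] (c : ι → ℝ) (W : α → ℝ) :
    ∑ d, c d * ∑ z ∈ E d, W z = ∑ z, W z * ∑ d with z ∈ E d, c d := by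
  simp_rw [mul_sum]
  rw [sum_comm' (t' := univ) (s' := fun z => {d | z ∈ E d}) (by simp)]
  simp_rw [mul_comm]

theorem sum_mem_sum_filter_mem_eq (s : Finset α) (c : ι → ℝ) :
    ∑ z ∈ s, ∑ d with z ∈ E d, c d = ∑ d, #(s ∩ E d) * c d := by
  rw [sum_comm' (t' := univ) (s' := fun d => s ∩ E d) (by simp [and_comm])]
  simp

theorem sum_sum_filter_mem_le {q : ℕ} (hcard : ∀ d, #(E d) ≤ q)
    (hinter : Pairwise fun d d' => #(E d ∩ E d') ≤ 1) {c : ι → ℝ} (hc : 0 ≤ c) (d : ι) :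
    ∑ z ∈ E d, ∑ d' with z ∈ E d', c d' ≤ q * c d + ∑ d', c d' := by
  classical
  have hdiag : q * c d = ∑ d', if d' = d then q * c d' else 0 := by simp
  rw [sum_mem_sum_filter_mem_eq, hdiag, ← sum_add_distrib]
  refine sum_le_sum fun d' _ => ?_
  have hcd : 0 ≤ c d' := hc d'
  by_cases h : d' = d
  · subst h
    have : (#(E d' ∩ E d') : ℝ) ≤ q := by rw [inter_self]; exact_mod_cast hcard d'
    simp only [if_true]
    nlinarith
  · have : (#(E d ∩ E d') : ℝ) ≤ 1 := by exact_mod_cast hinter (Ne.symm h)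
    simp only [h, if_false]
    nlinarith

/-- Córdoba's `L²` estimate. With `T d = ∑_{E d} W` and `h z = ∑_{d ∋ z} T d`, Cauchy–Schwarz
gives `(∑ T²)² ≤ ‖W‖² ‖h‖²`, and `‖h‖² ≤ (q + #ι) ∑ T²` because distinct sets share at most one
point. -/
theorem sum_sq_sum_le_of_card_inter_le_one [Fintype α] {q : ℕ} (hcard : ∀ d, #(E d) ≤ q)
    (hinter : Pairwise fun d d' => #(E d ∩ E d') ≤ 1) {W : α → ℝ} (hW : 0 ≤ W) :
    ∑ d, (∑ z ∈ E d, W z) ^ 2 ≤ (q + Fintype.card ι) * ∑ z, W z ^ 2 := by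
  set T : ι → ℝ := fun d => ∑ z ∈ E d, W z
  set h : α → ℝ := fun z => ∑ d with z ∈ E d, T d
  have hT : 0 ≤ T := fun d => sum_nonneg fun z _ => hW z
  have hS : ∑ d, T d ^ 2 = ∑ z, W z * h z := by
    simp_rw [sq]; exact sum_mul_sum_mem_eq_sum_mul_sum_filter_mem E T W
  have hh : ∑ z, h z ^ 2 ≤ (q + Fintype.card ι) * ∑ d, T d ^ 2 := calc
    ∑ z, h z ^ 2 = ∑ d, T d * ∑ z ∈ E d, h z := by
      simp_rw [sq]; exact (sum_mul_sum_mem_eq_sum_mul_sum_filter_mem E T h).symm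
    _ ≤ ∑ d, T d * (q * T d + ∑ d', T d') :=
      sum_le_sum fun d _ => mul_le_mul_of_nonneg_left
        (sum_sum_filter_mem_le E hcard hinter hT d) (hT d)
    _ = q * ∑ d, T d ^ 2 + (∑ d, T d) ^ 2 := by
      rw [mul_sum, sq (∑ d, T d), sum_mul, ← sum_add_distrib]
      exact sum_congr rfl fun d _ => by ring
    _ ≤ q * ∑ d, T d ^ 2 + Fintype.card ι * ∑ d, T d ^ 2 := by
      gcongr; exact sq_sum_le_card_mul_sum_sq
    _ = (q + Fintype.card ι) * ∑ d, T d ^ 2 := by ring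
  have hCS : (∑ d, T d ^ 2) ^ 2 ≤ (∑ z, W z ^ 2) * ((q + Fintype.card ι) * ∑ d, T d ^ 2) := by
    rw [hS]
    exact (sum_mul_sq_le_sq_mul_sq _ W h).trans
      (mul_le_mul_of_nonneg_left (hS ▸ hh) (sum_nonneg fun z _ => sq_nonneg _))
  rcases (sum_nonneg fun d _ => sq_nonneg (T d) : 0 ≤ ∑ d, T d ^ 2).eq_or_lt with h0 | hpos
  · rw [← h0]; positivity
  · nlinarith

end Cordoba

section LpNorms

variable {X : Type*} [Fintype X]

theorem lpNormC_nonneg (r : ℝ) (g : X → ℂ) : 0 ≤ lpNormC r g :=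
  Real.rpow_nonneg (sum_nonneg fun _ _ => Real.rpow_nonneg (norm_nonneg _) r) _

theorem norm_le_lpNormC {r : ℝ} (hr : 0 < r) (g : X → ℂ) (x : X) : ‖g x‖ ≤ lpNormC r g := by
  rw [← Real.rpow_rpow_inv (norm_nonneg (g x)) hr.ne', lpNormC, one_div]
  exact Real.rpow_le_rpow (Real.rpow_nonneg (norm_nonneg _) r)
    (single_le_sum (f := fun x => ‖g x‖ ^ r) (fun _ _ => Real.rpow_nonneg (norm_nonneg _) r)
      (mem_univ x)) (inv_nonneg.mpr hr.le)

theorem lpNormR_mono {r : ℝ} (hr : 0 < r) {f g : X → ℝ} (hf : 0 ≤ f) (hfg : f ≤ g) :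
    lpNormR r f ≤ lpNormR r g := by
  refine Real.rpow_le_rpow (sum_nonneg fun _ _ => Real.rpow_nonneg (abs_nonneg _) r)
    (sum_le_sum fun x _ => ?_) (one_div_nonneg.mpr hr.le)
  rw [abs_of_nonneg (hf x), abs_of_nonneg ((hf x).trans (hfg x))]
  exact Real.rpow_le_rpow (hf x) (hfg x) hr.le

theorem lpNormR_le_of_sum_rpow_le {Y : Type*} [Fintype Y] {r C : ℝ} (hr : 0 < r) (hC : 0 ≤ C)
    {f : X → ℝ} {g : Y → ℝ} (hf : 0 ≤ f) (hg : 0 ≤ g) (h : ∑ x, f x ^ r ≤ C * ∑ y, g y ^ r) :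
    lpNormR r f ≤ C ^ (1 / r) * lpNormR r g := by
  simp only [lpNormR, fun x => abs_of_nonneg (hf x), fun y => abs_of_nonneg (hg y)]
  rw [← Real.mul_rpow hC (sum_nonneg fun y _ => Real.rpow_nonneg (hg y) r)]
  exact Real.rpow_le_rpow (sum_nonneg fun x _ => Real.rpow_nonneg (hf x) r) h
    (one_div_nonneg.mpr hr.le)

theorem lpNormR_le_card_rpow_mul_lpNormR {r s : ℝ} (hr : 0 < r) (hrs : r ≤ s) (g : X → ℝ) :
    lpNormR r g ≤ (Fintype.card X : ℝ) ^ (1 / r - 1 / s) * lpNormR s g := by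
  have hs : 0 < s := hr.trans_le hrs
  have hsum_nonneg (p : ℝ) : 0 ≤ ∑ x, |g x| ^ p :=
    sum_nonneg fun _ _ => Real.rpow_nonneg (abs_nonneg _) p
  have hpow : (∑ x, |g x| ^ r) ^ (s / r) ≤ (Fintype.card X : ℝ) ^ (s / r - 1) * ∑ x, |g x| ^ s := by
    have := Real.rpow_sum_le_const_mul_sum_rpow_of_nonneg univ
      ((one_le_div hr).mpr hrs) fun x _ => Real.rpow_nonneg (abs_nonneg (g x)) r
    simp_rw [← Real.rpow_mul (abs_nonneg _), mul_div_cancel₀ s hr.ne', card_univ] at this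
    exact this
  have h := Real.rpow_le_rpow (Real.rpow_nonneg (hsum_nonneg r) _) hpow (one_div_nonneg.mpr hs.le)
  rwa [← Real.rpow_mul (hsum_nonneg r), Real.mul_rpow (Real.rpow_nonneg (Nat.cast_nonneg _) _)
      (hsum_nonneg s), ← Real.rpow_mul (Nat.cast_nonneg _),
    show s / r * (1 / s) = 1 / r by field_simp,
    show (s / r - 1) * (1 / s) = 1 / r - 1 / s by field_simp] at h

end LpNorms

theorem rpow_div_two_sq {x : ℝ} (hx : 0 ≤ x) (u : ℝ) : (x ^ (u / 2)) ^ 2 = x ^ u := by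
  rw [← Real.rpow_mul_natCast hx]; norm_num

theorem rpow_sum_le_card_rpow_mul_sq_sum_rpow_half {ι : Type*} (s : Finset ι) {f : ι → ℝ}
    (hf : ∀ i ∈ s, 0 ≤ f i) {u : ℝ} (hu : 2 ≤ u) :
    (∑ i ∈ s, f i) ^ u ≤ (#s : ℝ) ^ (u - 2) * (∑ i ∈ s, f i ^ (u / 2)) ^ 2 := by
  have hsum : 0 ≤ ∑ i ∈ s, f i := sum_nonneg hf
  have h := Real.rpow_sum_le_const_mul_sum_rpow_of_nonneg s (p := u / 2) (by linarith) hf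
  calc (∑ i ∈ s, f i) ^ u = ((∑ i ∈ s, f i) ^ (u / 2)) ^ 2 := (rpow_div_two_sq hsum u).symm
    _ ≤ ((#s : ℝ) ^ (u / 2 - 1) * ∑ i ∈ s, f i ^ (u / 2)) ^ 2 :=
        pow_le_pow_left₀ (Real.rpow_nonneg hsum _) h 2
    _ = (#s : ℝ) ^ (u - 2) * (∑ i ∈ s, f i ^ (u / 2)) ^ 2 := by
        rw [mul_pow, show u / 2 - 1 = (u - 2) / 2 by ring, rpow_div_two_sq (Nat.cast_nonneg _)]

section PlanarLines

variable {K : Type*} [Field K]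

theorem dirVec_ne_zero (d : Option K) : dirVec d ≠ 0 := by
  cases d <;> simp [dirVec]

theorem dirVec_det_ne_zero {d d' : Option K} (h : d ≠ d') :
    (dirVec d).1 * (dirVec d').2 - (dirVec d).2 * (dirVec d').1 ≠ 0 := by
  cases d <;> cases d' <;> simp_all [dirVec, sub_eq_zero, eq_comm]

theorem add_smul_dirVec_injective (p : K × K) (d : Option K) :
    Function.Injective fun s : K => p + s • dirVec d :=
  fun _ _ hst => smul_left_injective K (dirVec_ne_zero d) (add_left_cancel hst)

variable [Fintype K] [DecidableEq K]

/-- The projection to `F_q²` of a horizontal line in direction `d`. -/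
def planarLine (p : K × K) (d : Option K) : Finset (K × K) :=
  univ.image fun s : K => p + s • dirVec d

theorem card_planarLine (p : K × K) (d : Option K) : #(planarLine p d) = Fintype.card K := by
  rw [planarLine, card_image_of_injective _ (add_smul_dirVec_injective p d), card_univ]

theorem card_planarLine_inter_le_one (p p' : K × K) {d d' : Option K} (h : d ≠ d') :
    #(planarLine p d ∩ planarLine p' d') ≤ 1 := by
  simp only [card_le_one, planarLine, mem_inter, mem_image, mem_univ, true_and]
  rintro _ ⟨⟨s, rfl⟩, ⟨t, hst⟩⟩ _ ⟨⟨s', rfl⟩, ⟨t', hst'⟩⟩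
  have h1 := congrArg Prod.fst hst; have h2 := congrArg Prod.snd hst
  have h1' := congrArg Prod.fst hst'; have h2' := congrArg Prod.snd hst'
  simp only [Prod.fst_add, Prod.snd_add, Prod.smul_fst, Prod.smul_snd, smul_eq_mul] at h1 h2 h1' h2'
  have : (s - s') * ((dirVec d).1 * (dirVec d').2 - (dirVec d).2 * (dirVec d').1) = 0 := by
    linear_combination (dirVec d').2 * (h1' - h1) - (dirVec d').1 * (h2' - h2)
  rw [sub_eq_zero.mp ((mul_eq_zero.mp this).resolve_right (dirVec_det_ne_zero h))]

theorem sum_rpow_sum_planarLine_le {u : ℝ} (hu : 2 ≤ u) (P : Option K → K × K)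
    {G : K × K → ℝ} (hG : 0 ≤ G) :
    ∑ d, (∑ z ∈ planarLine (P d) d, G z) ^ u
      ≤ (Fintype.card K : ℝ) ^ (u - 2) * (2 * Fintype.card K + 1) * ∑ z, G z ^ u := by
  have hcordoba := sum_sq_sum_le_of_card_inter_le_one (fun d => planarLine (P d) d)
    (fun d => (card_planarLine (P d) d).le)
    (fun d d' h => card_planarLine_inter_le_one (P d) (P d') h)
    (W := fun z => G z ^ (u / 2)) fun z => Real.rpow_nonneg (hG z) _
  simp only [fun z => rpow_div_two_sq (hG z) u, Fintype.card_option, Nat.cast_add,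
    Nat.cast_one] at hcordoba
  calc ∑ d, (∑ z ∈ planarLine (P d) d, G z) ^ u
      ≤ ∑ d, (Fintype.card K : ℝ) ^ (u - 2) * (∑ z ∈ planarLine (P d) d, G z ^ (u / 2)) ^ 2 :=
        sum_le_sum fun d _ => card_planarLine (P d) d ▸
          rpow_sum_le_card_rpow_mul_sq_sum_rpow_half _ (fun z _ => hG z) hu
    _ ≤ (Fintype.card K : ℝ) ^ (u - 2) * (2 * Fintype.card K + 1) * ∑ z, G z ^ u := by
        rw [← mul_sum, mul_assoc]
        refine mul_le_mul_of_nonneg_left (hcordoba.trans_eq ?_) (by positivity)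
        ring

end PlanarLines

section Heisenberg

variable {K : Type*} [Fintype K]

def fiberNorm (u : ℝ) (Fc : K × K × K → ℂ) (z : K × K) : ℝ :=
  lpNormC u fun t => Fc (z.1, z.2, t)

theorem lpNormR_fiberNorm {u : ℝ} (hu : u ≠ 0) (Fc : K × K × K → ℂ) :
    lpNormR u (fiberNorm u Fc) = lpNormC u Fc := by
  have hfib (z : K × K) : |fiberNorm u Fc z| ^ u = ∑ t, ‖Fc (z.1, z.2, t)‖ ^ u := by
    rw [fiberNorm, lpNormC, abs_of_nonneg (Real.rpow_nonneg (sum_nonneg fun _ _ =>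
      Real.rpow_nonneg (norm_nonneg _) u) _), one_div,
      Real.rpow_inv_rpow (sum_nonneg fun _ _ => Real.rpow_nonneg (norm_nonneg _) u) hu]
  simp only [lpNormR, lpNormC, hfib, Fintype.sum_prod_type]

variable [Field K]

theorem lineSumH1_le_sum_planarLine_fiberNorm [DecidableEq K] {u : ℝ} (hu : 0 < u)
    (Fc : K × K × K → ℂ) (p : K × K × K) (d : Option K) :
    lineSumH1 Fc p (dirVec d) ≤ ∑ z ∈ planarLine (p.1, p.2.1) d, fiberNorm u Fc z := by
  rw [planarLine, sum_image fun s _ t _ hst => add_smul_dirVec_injective _ d hst]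
  exact sum_le_sum fun s _ =>
    norm_le_lpNormC (g := fun t => Fc (p.1 + s * (dirVec d).1, p.2.1 + s * (dirVec d).2, t)) hu _

theorem exists_MH1_eq_lineSumH1 (Fc : K × K × K → ℂ) (d : Option K) :
    ∃ p, MH1 Fc d = lineSumH1 Fc p (dirVec d) := by
  obtain ⟨p, -, hp⟩ := exists_mem_eq_sup' _ fun p => lineSumH1 Fc p (dirVec d)
  exact ⟨p, hp⟩

theorem MH1_nonneg (Fc : K × K × K → ℂ) : 0 ≤ MH1 Fc := fun d => by
  obtain ⟨p, hp⟩ := exists_MH1_eq_lineSumH1 Fc d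
  exact hp ▸ sum_nonneg fun _ _ => norm_nonneg _

end Heisenberg

theorem add_one_rpow_mul_rpow_le {q u v : ℝ} (hq : 1 ≤ q) (hu : 2 ≤ u) (hv : 1 ≤ v) (hvu : v ≤ u) :
    (q + 1) ^ (1 / v - 1 / u) * (q ^ (u - 2) * (2 * q + 1)) ^ (1 / u)
      ≤ 2 * √2 * q ^ (1 + 1 / v - 2 / u) := by
  have hq0 : 0 < q := by linarith
  have hu0 : 0 < u := by linarith
  have hv0 : 0 < v := by linarith
  have hvu' : 0 ≤ 1 / v - 1 / u := sub_nonneg.mpr (one_div_le_one_div_of_le hv0 hvu)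
  have hdirs : (q + 1) ^ (1 / v - 1 / u) ≤ 2 ^ (1 / v - 1 / u) * q ^ (1 / v - 1 / u) := by
    rw [← Real.mul_rpow (by norm_num) hq0.le]
    exact Real.rpow_le_rpow (by positivity) (by linarith) hvu'
  have hlines : (q ^ (u - 2) * (2 * q + 1)) ^ (1 / u) ≤ 3 ^ (1 / u) * q ^ (1 - 1 / u) := by
    have : q ^ (u - 2) * (2 * q + 1) ≤ 3 * q ^ (u - 1) := by
      rw [show u - 1 = u - 2 + 1 by ring, Real.rpow_add_one hq0.ne']
      nlinarith [Real.rpow_nonneg hq0.le (u - 2)]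
    calc (q ^ (u - 2) * (2 * q + 1)) ^ (1 / u) ≤ (3 * q ^ (u - 1)) ^ (1 / u) :=
          Real.rpow_le_rpow (by positivity) this (by positivity)
      _ = 3 ^ (1 / u) * q ^ (1 - 1 / u) := by
          rw [Real.mul_rpow (by norm_num) (by positivity), ← Real.rpow_mul hq0.le]
          congr 2; field_simp
  have hconst : (2 : ℝ) ^ (1 / v - 1 / u) * 3 ^ (1 / u) ≤ 2 * √2 := by
    have h3 : (3 : ℝ) ^ (1 / u) = 2 ^ (1 / u) * (3 / 2) ^ (1 / u) := by
      rw [← Real.mul_rpow (by norm_num) (by norm_num)]; norm_num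
    rw [h3, ← mul_assoc, ← Real.rpow_add two_pos, sub_add_cancel]
    refine mul_le_mul ?_ ?_ (by positivity) (by norm_num)
    · exact (Real.rpow_le_rpow_of_exponent_le (by norm_num) ((div_le_one hv0).mpr hv)).trans_eq
        (Real.rpow_one 2)
    · calc ((3 : ℝ) / 2) ^ (1 / u) ≤ (3 / 2) ^ (1 / 2 : ℝ) :=
            Real.rpow_le_rpow_of_exponent_le (by norm_num) (one_div_le_one_div_of_le two_pos hu)
        _ = √(3 / 2) := (Real.sqrt_eq_rpow _).symm
        _ ≤ √2 := Real.sqrt_le_sqrt (by norm_num)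
  calc (q + 1) ^ (1 / v - 1 / u) * (q ^ (u - 2) * (2 * q + 1)) ^ (1 / u)
      ≤ (2 ^ (1 / v - 1 / u) * q ^ (1 / v - 1 / u)) * (3 ^ (1 / u) * q ^ (1 - 1 / u)) :=
        mul_le_mul hdirs hlines (by positivity) (by positivity)
    _ = (2 ^ (1 / v - 1 / u) * 3 ^ (1 / u)) * q ^ (1 + 1 / v - 2 / u) := by
        rw [mul_mul_mul_comm, ← Real.rpow_add hq0]; ring_nf
    _ ≤ 2 * √2 * q ^ (1 + 1 / v - 2 / u) :=
        mul_le_mul_of_nonneg_right hconst (by positivity)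

/-- For `2 ≤ u < ∞` and `1 ≤ v ≤ u`,
`‖M_{H₁} F‖_{ℓ^v(P¹(F_q))} ≤ 2√2 · q^{1 + 1/v - 2/u} · ‖F‖_{ℓ^u(H₁(F_q))}`. -/
theorem stmt_4 {K : Type*} [Field K] [Fintype K] (u v : ℝ) (hu : 2 ≤ u)
    (hv : 1 ≤ v) (hvu : v ≤ u) (Fc : K × K × K → ℂ) :
    lpNormR v (MH1 Fc) ≤
      2 * Real.sqrt 2 * (Fintype.card K : ℝ) ^ (1 + 1 / v - 2 / u) * lpNormC u Fc := by
  classical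
  set q : ℝ := (Fintype.card K : ℝ)
  have hu0 : 0 < u := by linarith
  have hv0 : 0 < v := by linarith
  choose P hP using exists_MH1_eq_lineSumH1 Fc
  set T : Option K → ℝ := fun d => ∑ z ∈ planarLine ((P d).1, (P d).2.1) d, fiberNorm u Fc z
  have hfiber : 0 ≤ fiberNorm u Fc := fun z => lpNormC_nonneg u _
  have hMT : MH1 Fc ≤ T := fun d =>
    (hP d).trans_le (lineSumH1_le_sum_planarLine_fiberNorm hu0 Fc (P d) d)
  have hT : lpNormR u T ≤ (q ^ (u - 2) * (2 * q + 1)) ^ (1 / u) * lpNormC u Fc := by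
    rw [← lpNormR_fiberNorm hu0.ne' Fc]
    exact lpNormR_le_of_sum_rpow_le hu0 (by positivity) (fun d => sum_nonneg fun z _ => hfiber z)
      hfiber (sum_rpow_sum_planarLine_le hu _ hfiber)
  calc lpNormR v (MH1 Fc) ≤ lpNormR v T := lpNormR_mono hv0 (MH1_nonneg Fc) hMT
    _ ≤ (q + 1) ^ (1 / v - 1 / u) * lpNormR u T := by
        simpa [q] using lpNormR_le_card_rpow_mul_lpNormR hv0 hvu T
    _ ≤ (q + 1) ^ (1 / v - 1 / u) * ((q ^ (u - 2) * (2 * q + 1)) ^ (1 / u) * lpNormC u Fc) := by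
        gcongr
    _ ≤ 2 * √2 * q ^ (1 + 1 / v - 2 / u) * lpNormC u Fc := by
        rw [← mul_assoc]
        exact mul_le_mul_of_nonneg_right
          (add_one_rpow_mul_rpow_le (Nat.one_le_cast.mpr Fintype.card_pos) hu hv hvu)
          (lpNormC_nonneg u Fc)
end
end

section
/- Let q be a prime power and let u, v be real exponents with 1 ≤ v ≤ u ≤ 2. Then for every F : H_1(F_q) → ℂ one has ‖M_{H1} F‖_{ℓ^v(P^1(F_q))} ≤ 2 · q^{1/v} · ‖F‖_{ℓ^u(H_1(F_q))}. -/
/-!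
`K` plays the role of the finite field `F_q` with `q = Fintype.card K` elements
(the cardinality of a finite field is automatically a prime power).
The Heisenberg group `H₁(F_q)` is identified with `K × K × K`.
The projective line `P¹(F_q)` is identified with `Option K`, where `some m`
corresponds to the direction class `[1 : m]` and `none` to `[0 : 1]`
(every class has a unique such normal form).
-/

noncomputable section

open Finset

lemma hPoint_inj {K : Type*} [Field K] (p : K × K × K) (d : Option K) :
    Function.Injective (fun s => hPoint p (dirVec d) s) := by
  intro s t h
  cases d <;> simp [hPoint, dirVec, Prod.ext_iff] at h <;> tauto

lemma cross_unique {K : Type*} [Field K] (p p' : K × K × K) {d d' : Option K} (hdd : d ≠ d')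
    {s₁ t₁ s₂ t₂ : K} (h₁ : hPoint p (dirVec d) s₁ = hPoint p' (dirVec d') t₁)
    (h₂ : hPoint p (dirVec d) s₂ = hPoint p' (dirVec d') t₂) : s₁ = s₂ ∧ t₁ = t₂ := by
  cases d with
  | none =>
    cases d' with
    | none => exact absurd rfl hdd
    | some m =>
      simp only [hPoint, dirVec, Prod.ext_iff] at h₁ h₂
      obtain ⟨hx₁, hy₁, -⟩ := h₁
      obtain ⟨hx₂, hy₂, -⟩ := h₂
      have ht : t₁ = t₂ := by linear_combination hx₂ - hx₁
      refine ⟨?_, ht⟩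
      linear_combination hy₁ - hy₂ + m * hx₂ - m * hx₁
  | some m =>
    cases d' with
    | none =>
      simp only [hPoint, dirVec, Prod.ext_iff] at h₁ h₂
      obtain ⟨hx₁, hy₁, -⟩ := h₁
      obtain ⟨hx₂, hy₂, -⟩ := h₂
      have hs : s₁ = s₂ := by linear_combination hx₁ - hx₂
      refine ⟨hs, ?_⟩
      linear_combination m * hx₁ - m * hx₂ - hy₁ + hy₂
    | some m' =>
      have hm : m ≠ m' := by intro h; exact hdd (by rw [h])
      simp only [hPoint, dirVec, Prod.ext_iff] at h₁ h₂
      obtain ⟨hx₁, hy₁, -⟩ := h₁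
      obtain ⟨hx₂, hy₂, -⟩ := h₂
      have key : (s₁ - s₂) * (m - m') = 0 := by
        linear_combination hy₁ - hy₂ - m' * hx₁ + m' * hx₂
      have hs : s₁ = s₂ := by
        rcases mul_eq_zero.1 key with h | h
        · exact sub_eq_zero.1 h
        · exact absurd (sub_eq_zero.1 h) hm
      refine ⟨hs, ?_⟩
      rw [hs] at hx₁
      linear_combination hx₂ - hx₁


lemma cordoba {K : Type*} [Field K] [Fintype K] (f : K × K × K → ℝ) (hf : ∀ z, 0 ≤ f z)
    (P : Option K → K × K × K) :
    ∑ d : Option K, (∑ s : K, f (hPoint (P d) (dirVec d) s)) ^ 2 ≤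
      (2 * (Fintype.card K : ℝ) + 1) * ∑ z, f z ^ 2 := by
  classical
  set q : ℝ := (Fintype.card K : ℝ) with hq
  set ℓ : Option K → K → K × K × K := fun d s => hPoint (P d) (dirVec d) s with hℓ
  have hinj : ∀ d, Function.Injective (ℓ d) := fun d => hPoint_inj (P d) d
  set M : Option K → ℝ := fun d => ∑ s : K, f (ℓ d s) with hM
  have hMd : ∀ d, M d = ∑ s : K, f (ℓ d s) := fun d => rfl
  have hMnn : ∀ d, 0 ≤ M d := fun d => sum_nonneg fun s _ => hf _
  set N : K × K × K → ℝ := fun z => ∑ d : Option K, ∑ s : K, if ℓ d s = z then M d else 0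
    with hN
  set A : ℝ := ∑ d : Option K, M d ^ 2 with hA
  have hA0 : 0 ≤ A := sum_nonneg fun d _ => sq_nonneg _
  -- the counting quantity
  have cnt_card : ∀ d d', (∑ s : K, ∑ s' : K, if ℓ d s = ℓ d' s' then (1:ℝ) else 0)
      = (((univ ×ˢ univ : Finset (K × K)).filter fun ss => ℓ d ss.1 = ℓ d' ss.2).card : ℝ) := by
    intro d d'
    rw [← Finset.sum_product', Finset.sum_boole]
  have hcnt_diag : ∀ d, (∑ s : K, ∑ s' : K, if ℓ d s = ℓ d s' then (1:ℝ) else 0) ≤ q := by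
    intro d
    have : ∀ s : K, (∑ s' : K, if ℓ d s = ℓ d s' then (1:ℝ) else 0) = 1 := by
      intro s
      simp only [(hinj d).eq_iff]
      rw [Finset.sum_ite_eq univ s (fun _ => (1:ℝ))]
      simp
    rw [Finset.sum_congr rfl fun s _ => this s]
    simp [hq]
  have hcnt_off : ∀ d d', d ≠ d' →
      (∑ s : K, ∑ s' : K, if ℓ d s = ℓ d' s' then (1:ℝ) else 0) ≤ 1 := by
    intro d d' hdd
    rw [cnt_card d d']
    have : (((univ ×ˢ univ : Finset (K × K)).filter
        fun ss => ℓ d ss.1 = ℓ d' ss.2).card : ℕ) ≤ 1 := by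
      apply Finset.card_le_one.2
      intro a ha b hb
      have ha' := (Finset.mem_filter.1 ha).2
      have hb' := (Finset.mem_filter.1 hb).2
      obtain ⟨h1, h2⟩ := cross_unique (P d) (P d') hdd ha' hb'
      exact Prod.ext h1 h2
    exact_mod_cast this
  -- Step 1 : A = ∑ z, f z * N z
  have step1 : A = ∑ z, f z * N z := by
    rw [hA]
    have key : ∀ z, f z * N z = ∑ d : Option K, ∑ s : K,
        if ℓ d s = z then f z * M d else 0 := by
      intro z
      rw [hN, mul_sum]
      refine sum_congr rfl fun d _ => ?_
      rw [mul_sum]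
      refine sum_congr rfl fun s _ => ?_
      simp [mul_ite]
    rw [Finset.sum_congr rfl fun z _ => key z]
    rw [Finset.sum_comm]
    refine sum_congr rfl fun d _ => ?_
    rw [Finset.sum_comm]
    have key2 : ∀ s : K, (∑ z, if ℓ d s = z then f z * M d else 0) = f (ℓ d s) * M d := by
      intro s
      rw [Finset.sum_ite_eq univ (ℓ d s) (fun z => f z * M d)]
      simp
    rw [Finset.sum_congr rfl fun s _ => key2 s, ← Finset.sum_mul, ← hMd, ← pow_two]
  -- expansion of ∑ N²
  have expand : ∑ z, N z ^ 2 = ∑ d' : Option K, M d' * ∑ s' : K, N (ℓ d' s') := by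
    have key : ∀ z, N z ^ 2 = ∑ d' : Option K, ∑ s' : K,
        if ℓ d' s' = z then N z * M d' else 0 := by
      intro z
      rw [pow_two]
      conv_lhs => rw [hN]
      rw [Finset.sum_mul]
      refine sum_congr rfl fun d' _ => ?_
      rw [Finset.sum_mul]
      refine sum_congr rfl fun s' _ => ?_
      rw [ite_mul, zero_mul, mul_comm (M d') (N z)]
    rw [Finset.sum_congr rfl fun z _ => key z, Finset.sum_comm]
    refine sum_congr rfl fun d' _ => ?_
    rw [Finset.sum_comm, mul_sum]
    refine sum_congr rfl fun s' _ => ?_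
    rw [Finset.sum_ite_eq univ (ℓ d' s') (fun z => N z * M d')]
    simp [mul_comm]
  have inner_bound : ∀ d', ∑ s' : K, N (ℓ d' s') ≤ q * M d' + ∑ d : Option K, M d := by
    intro d'
    have e1 : ∑ s' : K, N (ℓ d' s') = ∑ d : Option K,
        M d * (∑ s : K, ∑ s' : K, if ℓ d s = ℓ d' s' then (1:ℝ) else 0) := by
      simp only [hN]
      rw [Finset.sum_comm]
      refine sum_congr rfl fun d _ => ?_
      rw [Finset.sum_comm, mul_sum]
      refine sum_congr rfl fun s _ => ?_
      rw [mul_sum]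
      refine sum_congr rfl fun s' _ => ?_
      simp [mul_ite]
    rw [e1]
    have hbd : ∀ d : Option K, M d * (∑ s : K, ∑ s' : K,
        if ℓ d s = ℓ d' s' then (1:ℝ) else 0) ≤ (if d = d' then q * M d' else 0) + M d := by
      intro d
      by_cases h : d = d'
      · subst h
        rw [if_pos rfl]
        have h1 : M d * (∑ s : K, ∑ s' : K, if ℓ d s = ℓ d s' then (1:ℝ) else 0) ≤ M d * q :=
          mul_le_mul_of_nonneg_left (hcnt_diag d) (hMnn d)
        have h2 : M d * q = q * M d := mul_comm _ _
        linarith [hMnn d]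
      · rw [if_neg h]
        have h1 : M d * (∑ s : K, ∑ s' : K, if ℓ d s = ℓ d' s' then (1:ℝ) else 0) ≤ M d * 1 :=
          mul_le_mul_of_nonneg_left (hcnt_off d d' h) (hMnn d)
        simpa using h1
    calc ∑ d : Option K, M d * (∑ s : K, ∑ s' : K, if ℓ d s = ℓ d' s' then (1:ℝ) else 0)
        ≤ ∑ d : Option K, ((if d = d' then q * M d' else 0) + M d) :=
          sum_le_sum fun d _ => hbd d
      _ = q * M d' + ∑ d : Option K, M d := by
          rw [Finset.sum_add_distrib, Finset.sum_ite_eq' univ d' (fun _ => q * M d')]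
          simp
  have step3 : ∑ z, N z ^ 2 ≤ (2 * q + 1) * A := by
    rw [expand]
    have sumM_sq : (∑ d : Option K, M d) ^ 2 ≤ (q + 1) * A := by
      have h := sq_sum_le_card_mul_sum_sq (s := (univ : Finset (Option K))) (f := M)
      rw [Finset.card_univ, Fintype.card_option] at h
      have hc : ((Fintype.card K + 1 : ℕ) : ℝ) = q + 1 := by push_cast [hq]; ring
      rw [hc] at h
      rw [hA]
      exact h
    calc ∑ d' : Option K, M d' * ∑ s' : K, N (ℓ d' s')
        ≤ ∑ d' : Option K, M d' * (q * M d' + ∑ d : Option K, M d) :=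
          sum_le_sum fun d' _ => mul_le_mul_of_nonneg_left (inner_bound d') (hMnn d')
      _ = q * A + (∑ d : Option K, M d) ^ 2 := by
          have e : ∀ d' : Option K, M d' * (q * M d' + ∑ d : Option K, M d)
              = q * M d' ^ 2 + M d' * ∑ d : Option K, M d := fun d' => by ring
          rw [Finset.sum_congr rfl fun d' _ => e d', Finset.sum_add_distrib,
            ← Finset.mul_sum, ← Finset.sum_mul, ← hA, ← pow_two]
      _ ≤ q * A + (q + 1) * A := by linarith
      _ = (2 * q + 1) * A := by ring
  have cs : A ^ 2 ≤ (∑ z, f z ^ 2) * ∑ z, N z ^ 2 := by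
    rw [step1]
    exact sum_mul_sq_le_sq_mul_sq univ f N
  have hS2 : (0:ℝ) ≤ ∑ z, f z ^ 2 := sum_nonneg fun z _ => sq_nonneg _
  rcases eq_or_lt_of_le hA0 with h0 | hpos
  · rw [← h0]
    positivity
  · have key : A * A ≤ ((2 * q + 1) * ∑ z, f z ^ 2) * A := by
      calc A * A = A ^ 2 := (pow_two A).symm
        _ ≤ (∑ z, f z ^ 2) * ∑ z, N z ^ 2 := cs
        _ ≤ (∑ z, f z ^ 2) * ((2 * q + 1) * A) :=
            mul_le_mul_of_nonneg_left step3 hS2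
        _ = ((2 * q + 1) * ∑ z, f z ^ 2) * A := by ring
    exact le_of_mul_le_mul_right key hpos


lemma power_mean {ι : Type*} [Fintype ι] [Nonempty ι] (M : ι → ℝ) (hM : ∀ d, 0 ≤ M d)
    {v : ℝ} (hv1 : 1 ≤ v) (hv2 : v ≤ 2) :
    ∑ d, M d ^ v ≤ (Fintype.card ι : ℝ) ^ (1 - v/2) * (∑ d, M d ^ (2:ℕ)) ^ (v/2) := by
  set n : ℝ := (Fintype.card ι : ℝ) with hn
  have hn0 : 0 < n := by
    rw [hn]; exact_mod_cast Fintype.card_pos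
  have hv0 : 0 < v := lt_of_lt_of_le one_pos hv1
  have hp : 1 ≤ 2 / v := by rw [le_div_iff₀ hv0]; linarith
  have hw : ∑ _d : ι, (1/n) = 1 := by
    rw [Finset.sum_const, Finset.card_univ, nsmul_eq_mul]
    field_simp
    exact hn.symm
  have h := Real.rpow_arith_mean_le_arith_mean_rpow univ (fun _ => 1/n) (fun d => M d ^ v)
    (fun d _ => by positivity) hw (fun d _ => Real.rpow_nonneg (hM d) v) hp
  have hz2 : ∀ d : ι, ((M d ^ v : ℝ)) ^ (2/v) = M d ^ (2:ℕ) := by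
    intro d
    rw [← Real.rpow_mul (hM d)]
    have : v * (2/v) = 2 := by field_simp
    rw [this]
    rw [show ((2:ℝ)) = ((2:ℕ) : ℝ) by norm_num, Real.rpow_natCast]
  simp only [hz2] at h
  rw [← Finset.mul_sum, ← Finset.mul_sum] at h
  -- h : ((1/n) * ∑ M^v) ^ (2/v) ≤ (1/n) * ∑ M^2
  set Sv : ℝ := ∑ d, M d ^ v with hSv
  set A : ℝ := ∑ d, M d ^ (2:ℕ) with hA
  have hSv0 : 0 ≤ Sv := sum_nonneg fun d _ => Real.rpow_nonneg (hM d) v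
  have hA0 : 0 ≤ A := sum_nonneg fun d _ => pow_nonneg (hM d) 2
  have hX0 : 0 ≤ (1/n) * Sv := by positivity
  have key : (1/n) * Sv ≤ ((1/n) * A) ^ (v/2) := by
    have h2 := Real.rpow_le_rpow (Real.rpow_nonneg hX0 _) h (by positivity : (0:ℝ) ≤ v/2)
    rwa [← Real.rpow_mul hX0, show (2/v) * (v/2) = 1 by field_simp, Real.rpow_one] at h2
  have : Sv = n * ((1/n) * Sv) := by field_simp
  rw [this]
  calc n * ((1/n) * Sv) ≤ n * ((1/n) * A) ^ (v/2) :=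
        mul_le_mul_of_nonneg_left key hn0.le
    _ = n ^ (1 - v/2) * A ^ (v/2) := by
        rw [Real.mul_rpow (by positivity) hA0, one_div, Real.inv_rpow hn0.le,
          Real.rpow_sub hn0, Real.rpow_one]
        field_simp

lemma lu_l2 {X : Type*} [Fintype X] (g : X → ℝ) (hg : ∀ z, 0 ≤ g z)
    {u : ℝ} (hu1 : 1 ≤ u) (hu2 : u ≤ 2) :
    ∑ z, g z ^ (2:ℕ) ≤ (∑ z, g z ^ u) ^ (2/u) := by
  have hu0 : 0 < u := lt_of_lt_of_le one_pos hu1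
  set Su : ℝ := ∑ z, g z ^ u with hSu
  have hSu0 : 0 ≤ Su := sum_nonneg fun z _ => Real.rpow_nonneg (hg z) u
  rcases eq_or_lt_of_le hSu0 with h0 | hpos
  · have hz : ∀ z ∈ (univ : Finset X), g z ^ u = 0 := by
      intro z _
      have := (Finset.sum_eq_zero_iff_of_nonneg
        (fun z _ => Real.rpow_nonneg (hg z) u)).1 h0.symm
      exact this z (mem_univ z)
    have hg0 : ∀ z : X, g z = 0 := by
      intro z
      have := hz z (mem_univ z)
      rcases (Real.rpow_eq_zero_iff_of_nonneg (hg z)).1 this with ⟨h, -⟩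
      exact h
    simp only [hg0]
    rw [Finset.sum_congr rfl (fun z _ => by norm_num : ∀ z ∈ univ, (0:ℝ) ^ (2:ℕ) = 0)]
    simp
    positivity
  · have pointwise : ∀ z : X, g z ^ (2:ℕ) ≤ Su ^ ((2-u)/u) * g z ^ u := by
      intro z
      rcases eq_or_lt_of_le (hg z) with hz0 | hzpos
      · rw [← hz0]
        norm_num
        positivity
      · have hle : g z ≤ Su ^ (1/u) := by
          have h1 : g z ^ u ≤ Su := Finset.single_le_sum
            (fun z _ => Real.rpow_nonneg (hg z) u) (mem_univ z)
          have h2 := Real.rpow_le_rpow (Real.rpow_nonneg (hg z) u) h1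
            (by positivity : (0:ℝ) ≤ 1/u)
          rwa [← Real.rpow_mul (hg z), show u * (1/u) = 1 by field_simp,
            Real.rpow_one] at h2
        have e1 : (g z : ℝ) ^ (2:ℕ) = g z ^ (2-u) * g z ^ u := by
          rw [← Real.rpow_add hzpos, show (2:ℝ) - u + u = 2 by ring,
            show ((2:ℝ)) = ((2:ℕ) : ℝ) by norm_num, Real.rpow_natCast]
        rw [e1]
        apply mul_le_mul_of_nonneg_right _ (Real.rpow_nonneg (hg z) u)
        calc g z ^ (2-u) ≤ (Su ^ (1/u)) ^ (2-u) :=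
              Real.rpow_le_rpow (hg z) hle (by linarith)
          _ = Su ^ ((2-u)/u) := by
              rw [← Real.rpow_mul hSu0, show (1/u) * (2-u) = (2-u)/u by ring]
    calc ∑ z, g z ^ (2:ℕ) ≤ ∑ z, Su ^ ((2-u)/u) * g z ^ u :=
          sum_le_sum fun z _ => pointwise z
      _ = Su ^ ((2-u)/u) * Su := by rw [← Finset.mul_sum]
      _ = Su ^ (2/u) := by
          rw [show (2:ℝ)/u = (2-u)/u + 1 by field_simp; ring, Real.rpow_add hpos,
            Real.rpow_one]

lemma arith {q e : ℝ} (hq : 2 ≤ q) (he1 : 1/2 ≤ e) (he2 : e ≤ 1) :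
    (q+1) ^ (e - 1/2) * (2*q+1) ^ ((1:ℝ)/2) ≤ 2 * q ^ e := by
  have hq0 : (0:ℝ) < q := by linarith
  have hq10 : (0:ℝ) < q + 1 := by linarith
  have h2q : (0:ℝ) < 2*q+1 := by linarith
  have hratio : 1 ≤ (q+1)/q := by rw [le_div_iff₀ hq0]; linarith
  have decomp : (q+1) ^ (e - 1/2) = ((q+1)/q) ^ (e - 1/2) * q ^ (e - 1/2) := by
    rw [← Real.mul_rpow (by positivity) hq0.le, div_mul_cancel₀ _ hq0.ne']
  have key2 : ((q+1)/q) ^ (e - 1/2) ≤ ((q+1)/q) ^ ((1:ℝ)/2) :=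
    Real.rpow_le_rpow_of_exponent_le hratio (by linarith)
  have inner : (q+1)/q * (2*q+1) ≤ 4 * q := by
    rw [div_mul_eq_mul_div, div_le_iff₀ hq0]
    nlinarith
  have sqrt4 : ((4:ℝ)) ^ ((1:ℝ)/2) = 2 := by
    rw [show (4:ℝ) = 2 ^ (2:ℕ) by norm_num, ← Real.rpow_natCast 2 2,
      ← Real.rpow_mul (by norm_num : (0:ℝ) ≤ 2)]
    norm_num
  calc (q+1) ^ (e - 1/2) * (2*q+1) ^ ((1:ℝ)/2)
      = ((q+1)/q) ^ (e - 1/2) * (2*q+1) ^ ((1:ℝ)/2) * q ^ (e - 1/2) := by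
        rw [decomp]; ring
    _ ≤ ((q+1)/q) ^ ((1:ℝ)/2) * (2*q+1) ^ ((1:ℝ)/2) * q ^ (e - 1/2) := by
        apply mul_le_mul_of_nonneg_right _ (Real.rpow_nonneg hq0.le _)
        exact mul_le_mul_of_nonneg_right key2 (Real.rpow_nonneg h2q.le _)
    _ = ((q+1)/q * (2*q+1)) ^ ((1:ℝ)/2) * q ^ (e - 1/2) := by
        rw [Real.mul_rpow (by positivity) h2q.le]
    _ ≤ (4 * q) ^ ((1:ℝ)/2) * q ^ (e - 1/2) := by
        apply mul_le_mul_of_nonneg_right _ (Real.rpow_nonneg hq0.le _)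
        exact Real.rpow_le_rpow (by positivity) inner (by norm_num)
    _ = 2 * q ^ ((1:ℝ)/2) * q ^ (e - 1/2) := by
        rw [Real.mul_rpow (by norm_num : (0:ℝ) ≤ 4) hq0.le, sqrt4]
    _ = 2 * q ^ e := by
        rw [mul_assoc, ← Real.rpow_add hq0]
        norm_num


/-- For `1 ≤ v ≤ u ≤ 2`,
`‖M_{H₁} F‖_{ℓ^v(P¹(F_q))} ≤ 2 · q^{1/v} · ‖F‖_{ℓ^u(H₁(F_q))}`. -/
theorem stmt_7 {K : Type*} [Field K] [Fintype K] (u v : ℝ) (hv : 1 ≤ v)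
    (hvu : v ≤ u) (hu : u ≤ 2) (Fc : K × K × K → ℂ) :
    lpNormR v (MH1 Fc) ≤
      2 * (Fintype.card K : ℝ) ^ (1 / v) * lpNormC u Fc := by
  classical
  set q : ℝ := (Fintype.card K : ℝ) with hqdef
  have hq2 : (2:ℝ) ≤ q := by
    have h := Fintype.one_lt_card (α := K)
    rw [hqdef]; exact_mod_cast h
  have hq0 : (0:ℝ) < q := by linarith
  have hv0 : 0 < v := lt_of_lt_of_le one_pos hv
  have hu1 : 1 ≤ u := le_trans hv hvu
  have hu0 : 0 < u := lt_of_lt_of_le one_pos hu1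
  have hv2 : v ≤ 2 := le_trans hvu hu
  set f : K × K × K → ℝ := fun z => ‖Fc z‖ with hfdef
  have hf : ∀ z, 0 ≤ f z := fun z => norm_nonneg _
  have hex : ∀ d : Option K, ∃ p : K × K × K,
      MH1 Fc d = ∑ s : K, f (hPoint p (dirVec d) s) := by
    intro d
    obtain ⟨p, -, hp⟩ := Finset.exists_mem_eq_sup'
      (⟨((0:K),(0:K),(0:K)), Finset.mem_univ _⟩ :
        (Finset.univ : Finset (K × K × K)).Nonempty)
      (fun p => lineSumH1 Fc p (dirVec d))
    exact ⟨p, hp⟩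
  choose P hP using hex
  have hMnn : ∀ d : Option K, 0 ≤ MH1 Fc d := by
    intro d; rw [hP d]; exact sum_nonneg fun s _ => hf _
  -- Córdoba bound
  have hcord : ∑ d : Option K, MH1 Fc d ^ (2:ℕ) ≤ (2*q+1) * ∑ z, f z ^ (2:ℕ) := by
    have h := cordoba f hf P
    calc ∑ d : Option K, MH1 Fc d ^ (2:ℕ)
        = ∑ d : Option K, (∑ s : K, f (hPoint (P d) (dirVec d) s)) ^ 2 :=
          Finset.sum_congr rfl fun d _ => by rw [hP d]
      _ ≤ (2*q+1) * ∑ z, f z ^ (2:ℕ) := h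
  have hl2 : ∑ z, f z ^ (2:ℕ) ≤ (∑ z, f z ^ u) ^ (2/u) := lu_l2 f hf hu1 hu
  set Su : ℝ := ∑ z, f z ^ u with hSudef
  have hSu0 : 0 ≤ Su := sum_nonneg fun z _ => Real.rpow_nonneg (hf z) u
  have hpm : ∑ d : Option K, MH1 Fc d ^ v ≤
      (q+1) ^ (1 - v/2) * (∑ d : Option K, MH1 Fc d ^ (2:ℕ)) ^ (v/2) := by
    have h := power_mean (MH1 Fc) hMnn hv hv2
    have hc : ((Fintype.card (Option K) : ℕ) : ℝ) = q + 1 := by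
      rw [Fintype.card_option, hqdef]; push_cast; ring
    rwa [hc] at h
  have hchain : ∑ d : Option K, MH1 Fc d ^ v ≤
      (q+1) ^ (1 - v/2) * ((2*q+1) * Su ^ (2/u)) ^ (v/2) := by
    refine le_trans hpm (mul_le_mul_of_nonneg_left ?_ (Real.rpow_nonneg (by positivity) _))
    refine Real.rpow_le_rpow (sum_nonneg fun d _ => pow_nonneg (hMnn d) 2) ?_ (by positivity)
    exact le_trans hcord (mul_le_mul_of_nonneg_left hl2 (by positivity))
  have lhs_eq : lpNormR v (MH1 Fc) = (∑ d : Option K, MH1 Fc d ^ v) ^ (1/v) := by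
    rw [lpNormR]
    congr 1
    exact Finset.sum_congr rfl fun d _ => by rw [abs_of_nonneg (hMnn d)]
  have rhs_eq : lpNormC u Fc = Su ^ (1/u) := rfl
  rw [lhs_eq, rhs_eq]
  have step : (∑ d : Option K, MH1 Fc d ^ v) ^ (1/v) ≤
      ((q+1) ^ (1 - v/2) * ((2*q+1) * Su ^ (2/u)) ^ (v/2)) ^ (1/v) :=
    Real.rpow_le_rpow (sum_nonneg fun d _ => Real.rpow_nonneg (hMnn d) v) hchain
      (by positivity)
  refine le_trans step ?_
  have h2q0 : (0:ℝ) ≤ 2*q+1 := by linarith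
  have expand : ((q+1) ^ (1 - v/2) * ((2*q+1) * Su ^ (2/u)) ^ (v/2)) ^ (1/v)
      = (q+1) ^ (1/v - 1/2) * (2*q+1) ^ ((1:ℝ)/2) * Su ^ (1/u) := by
    rw [Real.mul_rpow h2q0 (Real.rpow_nonneg hSu0 _),
      ← Real.rpow_mul hSu0,
      Real.mul_rpow (Real.rpow_nonneg (by positivity : (0:ℝ) ≤ q+1) _)
        (by positivity : (0:ℝ) ≤ (2*q+1) ^ (v/2) * Su ^ (2/u*(v/2))),
      Real.mul_rpow (Real.rpow_nonneg h2q0 _) (Real.rpow_nonneg hSu0 _),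
      ← Real.rpow_mul (by positivity : (0:ℝ) ≤ q+1),
      ← Real.rpow_mul h2q0, ← Real.rpow_mul hSu0,
      show (1 - v/2) * (1/v) = 1/v - 1/2 by
        rw [sub_mul, one_mul, div_mul_div_comm, mul_one, mul_comm 2 v, ← div_div,
          div_self hv0.ne'],
      show (v/2) * (1/v) = (1:ℝ)/2 by
        rw [div_mul_div_comm, mul_one, mul_comm 2 v, ← div_div, div_self hv0.ne'],
      show 2/u*(v/2)*(1/v) = 1/u by
        have hu := hu0.ne'; have hvne := hv0.ne'; field_simp,
      mul_assoc]
  rw [expand]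
  have harith : (q+1) ^ (1/v - 1/2) * (2*q+1) ^ ((1:ℝ)/2) ≤ 2 * q ^ (1/v) :=
    arith hq2 (one_div_le_one_div_of_le hv0 hv2) ((div_le_one hv0).2 hv)
  calc (q+1) ^ (1/v - 1/2) * (2*q+1) ^ ((1:ℝ)/2) * Su ^ (1/u)
      ≤ (2 * q ^ (1/v)) * Su ^ (1/u) :=
        mul_le_mul_of_nonneg_right harith (Real.rpow_nonneg hSu0 _)
    _ = 2 * q ^ (1/v) * Su ^ (1/u) := by ring
end
end

section
/- Let q be a prime power. Let S ⊆ H_1(F_q) be the union, over all direction classes [v] in P^1(F_q), of the horizontal lines L_{0,[v]} through the origin 0 = (0, 0, 0). Then |S| = q^2, and for every [v] in P^1(F_q) the maximal function of the indicator satisfies M_{H1} 1_S([v]) ≥ q. Consequently, for every real 1 ≤ v' < ∞, ‖M_{H1} 1_S‖_{ℓ^{v'}(P^1(F_q))} ≥ q · (q + 1)^{1/v'}. -/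
/-!
`K` plays the role of the finite field `F_q` with `q = Fintype.card K` elements
(the cardinality of a finite field is automatically a prime power).
The Heisenberg group `H₁(F_q)` is identified with `K × K × K`.
The projective line `P¹(F_q)` is identified with `Option K`, where `some m`
corresponds to the direction class `[1 : m]` and `none` to `[0 : 1]`
(every class has a unique such normal form).
-/

noncomputable section

open Finset

/-- The union of the horizontal lines through the origin, one in each direction
class of `P¹(F_q)`. -/
def SKak1 (K : Type*) [Field K] [Fintype K] : Set (K × K × K) :=
  { z | ∃ d : Option K, ∃ s : K, z = hPoint ((0 : K), (0 : K), (0 : K)) (dirVec d) s }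

/-! Horizontal lines through the origin are the lines `s ↦ (s a, s b, 0)`, so `S` is the
plane `t = 0`, which has `q²` points. Each such line lies in `S`, which gives
`M_{H₁} 1_S ≥ q` in every one of the `q + 1` directions, and summing this pointwise bound
gives the `ℓ^{v'}` estimate. -/

lemma hPoint_zero {K : Type*} [Field K] (v : K × K) (s : K) :
    hPoint (0, 0, 0) v s = (s * v.1, s * v.2, 0) := by
  simp [hPoint]

lemma exists_mul_dirVec_eq {K : Type*} [Field K] (x y : K) :
    ∃ d : Option K, ∃ s : K, s * (dirVec d).1 = x ∧ s * (dirVec d).2 = y := by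
  by_cases hx : x = 0
  · exact ⟨none, y, by simp [dirVec, hx]⟩
  · exact ⟨some (y / x), x, by simp [dirVec], by simp [dirVec, mul_div_cancel₀ _ hx]⟩

lemma SKak1_eq_range (K : Type*) [Field K] [Fintype K] :
    SKak1 K = Set.range fun p : K × K => (p.1, p.2, (0 : K)) := by
  ext ⟨x, y, t⟩
  simp only [SKak1, hPoint_zero, Set.mem_range, Prod.mk.injEq, Prod.exists]
  constructor
  · rintro ⟨d, s, rfl, rfl, rfl⟩
    exact ⟨_, _, rfl, rfl, rfl⟩
  · rintro ⟨x, y, rfl, rfl, rfl⟩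
    obtain ⟨d, s, hx, hy⟩ := exists_mul_dirVec_eq x y
    exact ⟨d, s, by rw [hx, hy]⟩

lemma ncard_SKak1 (K : Type*) [Field K] [Fintype K] :
    (SKak1 K).ncard = Fintype.card K ^ 2 := by
  rw [SKak1_eq_range, ← Set.image_univ,
    Set.ncard_image_of_injective _ fun p q h => by simpa [Prod.ext_iff] using h,
    Set.ncard_univ, Nat.card_eq_fintype_card, Fintype.card_prod, sq]

lemma lineSumH1_le_MH1 {K : Type*} [Field K] [Fintype K] (F : K × K × K → ℂ)
    (p : K × K × K) (d : Option K) : lineSumH1 F p (dirVec d) ≤ MH1 F d :=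
  Finset.le_sup' (fun p => lineSumH1 F p (dirVec d)) (Finset.mem_univ p)

lemma lineSumH1_indicator_of_forall_mem {K : Type*} [Field K] [Fintype K]
    {S : Set (K × K × K)} {p : K × K × K} {v : K × K} (h : ∀ s, hPoint p v s ∈ S) :
    lineSumH1 (S.indicator fun _ => (1 : ℂ)) p v = Fintype.card K := by
  simp [lineSumH1, Set.indicator_of_mem (h _)]

lemma card_le_MH1_indicator_SKak1 {K : Type*} [Field K] [Fintype K] (d : Option K) :
    (Fintype.card K : ℝ) ≤ MH1 ((SKak1 K).indicator fun _ => (1 : ℂ)) d := by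
  rw [← lineSumH1_indicator_of_forall_mem (S := SKak1 K) (p := (0, 0, 0))
    fun s => ⟨d, s, rfl⟩]
  exact lineSumH1_le_MH1 _ _ d

lemma mul_card_rpow_le_lpNormR {X : Type*} [Fintype X] {r c : ℝ} (hr : 0 < r) (hc : 0 ≤ c)
    {g : X → ℝ} (hg : ∀ x, c ≤ g x) :
    c * (Fintype.card X : ℝ) ^ (1 / r) ≤ lpNormR r g := by
  have hsum : (Fintype.card X : ℝ) * c ^ r ≤ ∑ x, |g x| ^ r :=
    calc (Fintype.card X : ℝ) * c ^ r = ∑ _x : X, c ^ r := by simp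
      _ ≤ ∑ x, |g x| ^ r := Finset.sum_le_sum fun x _ =>
        Real.rpow_le_rpow hc ((hg x).trans (le_abs_self _)) hr.le
  calc c * (Fintype.card X : ℝ) ^ (1 / r)
      = ((Fintype.card X : ℝ) * c ^ r) ^ (1 / r) := by
        rw [Real.mul_rpow (by positivity) (by positivity), ← Real.rpow_mul hc,
          mul_one_div_cancel hr.ne', Real.rpow_one, mul_comm]
    _ ≤ lpNormR r g := Real.rpow_le_rpow (by positivity) hsum (by positivity)

/-- The union `S` of the horizontal lines through the origin has
`|S| = q²`, `M_{H₁} 1_S ≥ q` in every direction, and hence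
`‖M_{H₁} 1_S‖_{ℓ^{v'}(P¹(F_q))} ≥ q (q+1)^{1/v'}` for all `1 ≤ v' < ∞`. -/
theorem stmt_9 (K : Type*) [Field K] [Fintype K] :
    (SKak1 K).ncard = Fintype.card K ^ 2 ∧
    (∀ d : Option K,
      (Fintype.card K : ℝ) ≤ MH1 ((SKak1 K).indicator fun _ => (1 : ℂ)) d) ∧
    ∀ v' : ℝ, 1 ≤ v' →
      (Fintype.card K : ℝ) * ((Fintype.card K : ℝ) + 1) ^ (1 / v') ≤
        lpNormR v' (MH1 ((SKak1 K).indicator fun _ => (1 : ℂ))) := by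
  refine ⟨ncard_SKak1 K, card_le_MH1_indicator_SKak1, fun v' hv' => ?_⟩
  simpa [Fintype.card_option] using
    mul_card_rpow_le_lpNormR (by linarith) (Nat.cast_nonneg _)
      (card_le_MH1_indicator_SKak1 (K := K))
end
end

section
/- Let q be a prime power and n ≥ 1. Let S ⊆ H_n(F_q) be the union, over all direction classes [v] in P^{2n−1}(F_q), of the horizontal lines L_{0,[v]} through the origin 0 = (0, 0, 0). Then |S| = q^{2n}, and for every [v] in P^{2n−1}(F_q) one has M_{Hn} 1_S([v]) ≥ q. Consequently, for every real 1 ≤ v' < ∞, ‖M_{Hn} 1_S‖_{ℓ^{v'}(P^{2n−1}(F_q))} ≥ q^{1 + (2n−1)/v'}. -/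
/-!
`K` plays the role of the finite field `F_q` with `q = Fintype.card K` elements
(the cardinality of a finite field is automatically a prime power).
The Heisenberg group `H_n(F_q)` is identified with `(Fin n → K) × (Fin n → K) × K`,
and the projective space `P^{2n-1}(F_q)` of horizontal directions with
`Projectivization K ((Fin n → K) × (Fin n → K))`.
-/

noncomputable section

open Finset

/-- Projectivizations of finite modules are finite. -/
noncomputable instance {K V : Type*} [DivisionRing K] [AddCommGroup V] [Module K V]
    [Finite V] : Fintype (Projectivization K V) :=
  have : Finite (Projectivization K V) := Quotient.finite _
  Fintype.ofFinite _

/-- The point of the horizontal line in `H_n(F_q)` through `p = (x₀, y₀, t₀)` with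
direction vector `v = (a, b)` corresponding to the parameter `s`, namely
`(x₀ + s a, y₀ + s b, t₀ + s (x₀ · b - y₀ · a))`. -/
def hPointN {K : Type*} [Field K] (n : ℕ) (p : (Fin n → K) × (Fin n → K) × K)
    (v : (Fin n → K) × (Fin n → K)) (s : K) : (Fin n → K) × (Fin n → K) × K :=
  (p.1 + s • v.1, p.2.1 + s • v.2,
    p.2.2 + s * ((∑ i, p.1 i * v.2 i) - ∑ i, p.2.1 i * v.1 i))

/-- The horizontal Kakeya maximal function `M_{H_n} F` on `P^{2n-1}(F_q)`:
the maximum over all base points `p` of the sum of `|F|` along the horizontal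
line through `p` in the given direction class (computed using the chosen
representative `d.rep`; the value is independent of the representative). -/
def MHn {K : Type*} [Field K] [Fintype K] (n : ℕ)
    (Fc : (Fin n → K) × (Fin n → K) × K → ℂ)
    (d : Projectivization K ((Fin n → K) × (Fin n → K))) : ℝ :=
  Finset.univ.sup' ⟨(0, 0, 0), Finset.mem_univ _⟩
    fun p => ∑ s : K, ‖Fc (hPointN n p d.rep s)‖

/-- The union of the horizontal lines through the origin of `H_n(F_q)`, one in
each horizontal direction class. -/
def SKakN (K : Type*) [Field K] [Fintype K] (n : ℕ) :
    Set ((Fin n → K) × (Fin n → K) × K) :=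
  { z | ∃ v : (Fin n → K) × (Fin n → K), v ≠ 0 ∧ ∃ s : K, z = hPointN n (0, 0, 0) v s }

/-!
The union `S` of the horizontal lines through the origin is exactly the hyperplane `t = 0`:
the line through `0` in direction `(a, b)` is `{(s a, s b, 0)}`, since the twisting term
`x₀ · b - y₀ · a` vanishes at the origin. Hence `|S| = q^{2n}`, and every direction class
carries a full line inside `S`, so `M_{H_n} 1_S ≥ q` everywhere. The `ℓ^r` bound then only
needs `|P^{2n-1}(F_q)| = 1 + q + ⋯ + q^{2n-1} ≥ q^{2n-1}`.
-/

lemma hPointN_zero {K : Type*} [Field K] (n : ℕ) (v : (Fin n → K) × (Fin n → K)) (s : K) :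
    hPointN n (0, 0, 0) v s = (s • v.1, s • v.2, 0) := by
  simp [hPointN]

lemma SKakN_eq_setOf_snd_snd_eq_zero (K : Type*) [Field K] [Fintype K] {n : ℕ} (hn : 0 < n) :
    SKakN K n = {z | z.2.2 = 0} := by
  ext ⟨x, y, t⟩
  simp only [SKakN, Set.mem_ofPred_eq, hPointN_zero]
  constructor
  · rintro ⟨v, -, s, h⟩
    exact (Prod.ext_iff.1 (Prod.ext_iff.1 h).2).2
  · rintro rfl
    by_cases hxy : (x, y) = 0
    · obtain ⟨rfl, rfl⟩ := Prod.ext_iff.1 hxy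
      refine ⟨(fun _ => 1, 0), fun h => one_ne_zero (congrFun (congrArg Prod.fst h) ⟨0, hn⟩), 0, ?_⟩
      simp
    · exact ⟨(x, y), hxy, 1, by simp⟩

lemma ncard_SKakN (K : Type*) [Field K] [Fintype K] {n : ℕ} (hn : 0 < n) :
    (SKakN K n).ncard = Fintype.card K ^ (2 * n) := by
  have hrange :
      SKakN K n = Set.range fun u : (Fin n → K) × (Fin n → K) => (u.1, u.2, (0 : K)) := by
    rw [SKakN_eq_setOf_snd_snd_eq_zero K hn]
    ext ⟨x, y, t⟩
    simp [eq_comm]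
  rw [hrange, Set.ncard_range_of_injective fun u u' h => by simpa [Prod.ext_iff] using h]
  simp [Nat.card_eq_fintype_card, two_mul, pow_add]

lemma sum_line_le_MHn {K : Type*} [Field K] [Fintype K] {n : ℕ}
    (F : (Fin n → K) × (Fin n → K) × K → ℂ) (d : Projectivization K ((Fin n → K) × (Fin n → K)))
    (p : (Fin n → K) × (Fin n → K) × K) :
    ∑ s : K, ‖F (hPointN n p d.rep s)‖ ≤ MHn n F d :=
  Finset.le_sup' (fun p => ∑ s : K, ‖F (hPointN n p d.rep s)‖) (Finset.mem_univ p)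

lemma card_le_MHn_indicator_SKakN (K : Type*) [Field K] [Fintype K] (n : ℕ)
    (d : Projectivization K ((Fin n → K) × (Fin n → K))) :
    (Fintype.card K : ℝ) ≤ MHn n ((SKakN K n).indicator fun _ => (1 : ℂ)) d := by
  have hline : ∀ s : K, hPointN n (0, 0, 0) d.rep s ∈ SKakN K n :=
    fun s => ⟨d.rep, d.rep_nonzero, s, rfl⟩
  calc (Fintype.card K : ℝ)
      = ∑ s : K, ‖(SKakN K n).indicator (fun _ => (1 : ℂ)) (hPointN n (0, 0, 0) d.rep s)‖ := by
        simp [Set.indicator_of_mem (hline _)]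
    _ ≤ _ := sum_line_le_MHn _ d (0, 0, 0)

lemma Projectivization.pow_le_card_of_finrank (k : Type*) {V : Type*} [Field k] [Finite k]
    [AddCommGroup V] [Module k V] {m : ℕ} (hm : Module.finrank k V = m + 1) :
    Nat.card k ^ m ≤ Nat.card (Projectivization k V) := by
  rw [Projectivization.card_of_finrank k V hm]
  exact Finset.single_le_sum (fun _ _ => Nat.zero_le _) (Finset.self_mem_range_succ m)

lemma rpow_le_card_projectivization (K : Type*) [Field K] [Fintype K] {n : ℕ} (hn : 0 < n) :
    (Fintype.card K : ℝ) ^ (2 * (n : ℝ) - 1) ≤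
      Fintype.card (Projectivization K ((Fin n → K) × (Fin n → K))) := by
  have hfinrank : Module.finrank K ((Fin n → K) × (Fin n → K)) = (2 * n - 1) + 1 := by
    simp only [Module.finrank_prod, Module.finrank_fin_fun]
    omega
  have h := Projectivization.pow_le_card_of_finrank K hfinrank
  rw [Nat.card_eq_fintype_card, Nat.card_eq_fintype_card] at h
  have hcast : ((2 * n - 1 : ℕ) : ℝ) = 2 * (n : ℝ) - 1 := by
    rw [Nat.cast_sub (by omega)]
    push_cast
    ring
  rw [← hcast, Real.rpow_natCast]
  exact_mod_cast h

lemma rpow_le_lpNormR_of_le {X : Type*} [Fintype X] {r c : ℝ} (hr : 0 < r) (hc : 0 ≤ c)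
    {g : X → ℝ} (hg : ∀ x, c ≤ g x) :
    (Fintype.card X : ℝ) ^ (1 / r) * c ≤ lpNormR r g := by
  have hsum : (Fintype.card X : ℝ) * c ^ r ≤ ∑ x, |g x| ^ r := by
    rw [← nsmul_eq_mul, ← Finset.card_univ, ← Finset.sum_const]
    refine Finset.sum_le_sum fun x _ => ?_
    rw [abs_of_nonneg (hc.trans (hg x))]
    exact Real.rpow_le_rpow hc (hg x) hr.le
  calc (Fintype.card X : ℝ) ^ (1 / r) * c
      = ((Fintype.card X : ℝ) * c ^ r) ^ (1 / r) := by
        rw [Real.mul_rpow (by positivity) (by positivity), ← Real.rpow_mul hc,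
          mul_one_div_cancel hr.ne', Real.rpow_one]
    _ ≤ lpNormR r g := Real.rpow_le_rpow (by positivity) hsum (by positivity)

/-- The union `S` of the horizontal lines through the origin of
`H_n(F_q)` has `|S| = q^{2n}`, `M_{H_n} 1_S ≥ q` in every direction of
`P^{2n-1}(F_q)`, and hence
`‖M_{H_n} 1_S‖_{ℓ^{v'}(P^{2n-1}(F_q))} ≥ q^{1 + (2n-1)/v'}` for all `1 ≤ v' < ∞`. -/
theorem stmt_11 (K : Type*) [Field K] [Fintype K] (n : ℕ) (hn : 1 ≤ n) :
    (SKakN K n).ncard = Fintype.card K ^ (2 * n) ∧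
    (∀ d : Projectivization K ((Fin n → K) × (Fin n → K)),
      (Fintype.card K : ℝ) ≤ MHn n ((SKakN K n).indicator fun _ => (1 : ℂ)) d) ∧
    ∀ v' : ℝ, 1 ≤ v' →
      (Fintype.card K : ℝ) ^ ((1 : ℝ) + (2 * (n : ℝ) - 1) / v') ≤
        lpNormR v' (MHn n ((SKakN K n).indicator fun _ => (1 : ℂ))) := by
  refine ⟨ncard_SKakN K hn, card_le_MHn_indicator_SKakN K n, fun r hr => ?_⟩
  set P := Projectivization K ((Fin n → K) × (Fin n → K))
  set q : ℝ := (Fintype.card K : ℝ)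
  have hq : 0 < q := Nat.cast_pos.2 Fintype.card_pos
  calc q ^ ((1 : ℝ) + (2 * (n : ℝ) - 1) / r)
      = (q ^ (2 * (n : ℝ) - 1)) ^ (1 / r) * q := by
        rw [← Real.rpow_mul hq.le, Real.rpow_add hq, Real.rpow_one, mul_one_div, mul_comm]
    _ ≤ (Fintype.card P : ℝ) ^ (1 / r) * q := by gcongr; exact rpow_le_card_projectivization K hn
    _ ≤ _ := rpow_le_lpNormR_of_le (by linarith) hq.le (card_le_MHn_indicator_SKakN K n)
end
end
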